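/- arXiv:1509.02100 — 3 statements merged into one kernel-verified Lean document; each statement's English description precedes it below -/
import Mathlib

section
/- Let H be a real Hilbert space, M a bounded self-adjoint operator with M ≥ 0, f ∈ H, c ∈ ℝ, J(u) = ⟨M u, u⟩ + ⟨f, u⟩ + c, and V = inf_u J(u) > -∞. For ε > 0 let u*_ε = -(1/2)(M + εI)⁻¹ f be the unique minimizer of J_ε(u) = J(u) + ε‖u‖². Then ε‖u*_ε‖² ≤ V_ε - V → 0 as ε → 0⁺, and consequently J(u*_ε) → V, i.e., {u*_ε} is a minimizing sequence for J. -/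
open scoped RealInnerProductSpace
open Filter

/-- If `J(u) = ⟨Mu,u⟩ + ⟨f,u⟩ + c` with `M ≥ 0` is bounded below with infimum `V`, and
`u*_ε` is the minimizer of `J_ε(u) = J(u) + ε‖u‖²` (with value `V_ε = J_ε(u*_ε)`), then
`ε‖u*_ε‖² ≤ V_ε - V`, `V_ε → V`, and `J(u*_ε) → V` as `ε → 0⁺`: `{u*_ε}` is a minimizing
sequence for `J`. -/
theorem stmt_3 {H : Type*} [NormedAddCommGroup H] [InnerProductSpace ℝ H] [CompleteSpace H]
    (M : H →L[ℝ] H) (hM : IsSelfAdjoint M) (hpos : ∀ u : H, 0 ≤ ⟪M u, u⟫)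
    (f : H) (c : ℝ) (J : H → ℝ) (hJ : ∀ u, J u = ⟪M u, u⟫ + ⟪f, u⟫ + c)
    (hbdd : BddBelow (Set.range J))
    (uε : ℝ → H)
    (hmin : ∀ ε : ℝ, 0 < ε → ∀ u : H,
      J (uε ε) + ε * ‖uε ε‖ ^ 2 ≤ J u + ε * ‖u‖ ^ 2) :
    (∀ ε : ℝ, 0 < ε →
      ε * ‖uε ε‖ ^ 2 ≤ (J (uε ε) + ε * ‖uε ε‖ ^ 2) - sInf (Set.range J)) ∧
    Tendsto (fun ε => J (uε ε) + ε * ‖uε ε‖ ^ 2)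
      (nhdsWithin 0 (Set.Ioi 0)) (nhds (sInf (Set.range J))) ∧
    Tendsto (fun ε => J (uε ε)) (nhdsWithin 0 (Set.Ioi 0)) (nhds (sInf (Set.range J))) := by
  set V := sInf (Set.range J) with hV
  have hle : ∀ u, V ≤ J u := fun u => csInf_le hbdd ⟨u, rfl⟩
  have hVle : ∀ ε : ℝ, 0 < ε → V ≤ J (uε ε) + ε * ‖uε ε‖ ^ 2 := fun ε hε =>
    le_trans (hle _) (le_add_of_nonneg_right (by positivity))
  have h1 : ∀ ε : ℝ, 0 < ε →
      ε * ‖uε ε‖ ^ 2 ≤ (J (uε ε) + ε * ‖uε ε‖ ^ 2) - V := by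
    intro ε hε
    have := hle (uε ε)
    linarith
  have h2 : Tendsto (fun ε => J (uε ε) + ε * ‖uε ε‖ ^ 2)
      (nhdsWithin 0 (Set.Ioi 0)) (nhds V) := by
    rw [Metric.tendsto_nhdsWithin_nhds]
    intro δ hδ
    have : Nonempty H := ⟨0⟩
    obtain ⟨y, ⟨u, rfl⟩, hy⟩ := Real.lt_sInf_add_pos (Set.range_nonempty J)  (half_pos hδ)
    refine ⟨δ / 2 / (‖u‖ ^ 2 + 1), by positivity, ?_⟩
    intro ε hε hεd
    have hε' : (0:ℝ) < ε := hε
    rw [Real.dist_eq] at hεd ⊢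
    rw [sub_zero, abs_of_pos hε'] at hεd
    have hεu : ε * ‖u‖ ^ 2 < δ / 2 := by
      calc ε * ‖u‖ ^ 2 ≤ ε * (‖u‖ ^ 2 + 1) := by nlinarith [sq_nonneg ‖u‖]
        _ < δ / 2 / (‖u‖ ^ 2 + 1) * (‖u‖ ^ 2 + 1) := by
            apply mul_lt_mul_of_pos_right hεd; positivity
        _ = δ / 2 := by field_simp
    have hup : J (uε ε) + ε * ‖uε ε‖ ^ 2 ≤ J u + ε * ‖u‖ ^ 2 := hmin ε hε' u
    have hlo := hVle ε hε'
    rw [abs_of_nonneg (by linarith)]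
    linarith
  refine ⟨h1, h2, ?_⟩
  have hconst : Tendsto (fun _ : ℝ => V) (nhdsWithin 0 (Set.Ioi 0)) (nhds V) :=
    tendsto_const_nhds
  refine tendsto_of_tendsto_of_tendsto_of_le_of_le' hconst h2 ?_ ?_
  · filter_upwards [self_mem_nhdsWithin] with ε hε
    exact hle _
  · filter_upwards [self_mem_nhdsWithin] with ε hε
    exact le_add_of_nonneg_right (mul_nonneg hε.le (sq_nonneg _))
end

section
/- Let H be a real Hilbert space, M a bounded self-adjoint operator with M ≥ 0, f ∈ H, c ∈ ℝ, J(u) = ⟨M u, u⟩ + ⟨f, u⟩ + c, and for ε > 0 let u*_ε be the unique minimizer of J(u) + ε‖u‖². If some subsequence u*_{ε_k} (ε_k → 0) converges weakly to u* ∈ H, then u* is a minimizer of J on H. -/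
open scoped RealInnerProductSpace
open Filter

/-- If `u*_ε` minimizes `J(u) + ε‖u‖²` (where `J(u) = ⟨Mu,u⟩ + ⟨f,u⟩ + c`, `M ≥ 0`) and some
subsequence `u*_{ε_k}` with `ε_k → 0⁺` converges weakly to `u*`, then `u*` minimizes `J`. -/
theorem stmt_6 {H : Type*} [NormedAddCommGroup H] [InnerProductSpace ℝ H] [CompleteSpace H]
    (M : H →L[ℝ] H) (hM : IsSelfAdjoint M) (hpos : ∀ u : H, 0 ≤ ⟪M u, u⟫)
    (f : H) (c : ℝ) (J : H → ℝ) (hJ : ∀ u, J u = ⟪M u, u⟫ + ⟪f, u⟫ + c)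
    (uε : ℝ → H)
    (hmin : ∀ ε : ℝ, 0 < ε → ∀ u : H,
      J (uε ε) + ε * ‖uε ε‖ ^ 2 ≤ J u + ε * ‖u‖ ^ 2)
    (εk : ℕ → ℝ) (hεk : ∀ k, 0 < εk k) (hεk0 : Tendsto εk atTop (nhds 0))
    (ustar : H)
    (hw : ∀ y : H, Tendsto (fun k => ⟪uε (εk k), y⟫) atTop (nhds ⟪ustar, y⟫)) :
    ∀ u : H, J ustar ≤ J u := by
  intro u
  set g : ℕ → ℝ := fun k =>
    2 * ⟪uε (εk k), M ustar⟫ - ⟪M ustar, ustar⟫ + ⟪uε (εk k), f⟫ + c with hg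
  have hsym : ∀ x y : H, ⟪M x, y⟫ = ⟪x, M y⟫ := fun x y => hM.isSymmetric x y
  -- g tends to J ustar
  have hgt : Tendsto g atTop (nhds (J ustar)) := by
    have h1 := hw (M ustar)
    have h2 := hw f
    have : Tendsto (fun k => 2 * ⟪uε (εk k), M ustar⟫ - ⟪M ustar, ustar⟫
        + ⟪uε (εk k), f⟫ + c) atTop
        (nhds (2 * ⟪ustar, M ustar⟫ - ⟪M ustar, ustar⟫ + ⟪ustar, f⟫ + c)) := by
      exact (((h1.const_mul 2).sub_const _).add h2).add_const c
    convert this using 2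
    rw [hJ]
    have : ⟪ustar, M ustar⟫ = ⟪M ustar, ustar⟫ := real_inner_comm _ _
    have hf : ⟪f, ustar⟫ = ⟪ustar, f⟫ := real_inner_comm _ _
    rw [this, hf]; ring
  -- g k ≤ J (uε (εk k))
  have hlsc : ∀ k, g k ≤ J (uε (εk k)) := by
    intro k
    set v := uε (εk k)
    have h0 : 0 ≤ ⟪M (v - ustar), v - ustar⟫ := hpos _
    have hexp : ⟪M (v - ustar), v - ustar⟫
        = ⟪M v, v⟫ - 2 * ⟪v, M ustar⟫ + ⟪M ustar, ustar⟫ := by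
      have hmv : M (v - ustar) = M v - M ustar := map_sub M v ustar
      rw [hmv, inner_sub_left, inner_sub_right, inner_sub_right]
      have h1 : ⟪M v, ustar⟫ = ⟪v, M ustar⟫ := hsym v ustar
      have h2 : ⟪M ustar, v⟫ = ⟪v, M ustar⟫ := real_inner_comm _ _
      rw [h1, h2]; ring
    rw [hJ]
    have : 2 * ⟪v, M ustar⟫ - ⟪M ustar, ustar⟫ ≤ ⟪M v, v⟫ := by linarith [hexp ▸ h0]
    have hf : ⟪v, f⟫ = ⟪f, v⟫ := real_inner_comm _ _
    simp only [hg, hf]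
    linarith
  -- J (uε (εk k)) ≤ J u + εk k * ‖u‖²
  have hub : ∀ k, g k ≤ J u + εk k * ‖u‖ ^ 2 := by
    intro k
    have h := hmin (εk k) (hεk k) u
    have hnn : 0 ≤ εk k * ‖uε (εk k)‖ ^ 2 :=
      mul_nonneg (hεk k).le (by positivity)
    calc g k ≤ J (uε (εk k)) := hlsc k
      _ ≤ J u + εk k * ‖u‖ ^ 2 := by linarith
  -- pass to the limit
  have hrhs : Tendsto (fun k => J u + εk k * ‖u‖ ^ 2) atTop (nhds (J u)) := by
    have : Tendsto (fun k => εk k * ‖u‖ ^ 2) atTop (nhds 0) := by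
      simpa using hεk0.mul_const (‖u‖ ^ 2)
    simpa using (tendsto_const_nhds.add this)
  exact le_of_tendsto_of_tendsto' hgt hrhs hub
end

section
/- Let H be a real Hilbert space, M a bounded self-adjoint operator with M ≥ 0, f ∈ H, c ∈ ℝ, J(u) = ⟨M u, u⟩ + ⟨f, u⟩ + c, and for ε > 0 let u*_ε be the unique minimizer of J(u) + ε‖u‖². Then J attains its infimum on H if and only if the family {u*_ε}_{ε > 0} is bounded in H, if and only if some sequence u*_{ε_k} with ε_k → 0 converges strongly in H. Moreover, any strong limit of such a subsequence is a minimizer of J. -/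
open scoped RealInnerProductSpace
open Filter

/-- For `J(u) = ⟨Mu,u⟩ + ⟨f,u⟩ + c` with `M ≥ 0` bounded self-adjoint, and `u*_ε` the
minimizer of `J(u) + ε‖u‖²`: `J` attains its infimum iff `{u*_ε}_{ε>0}` is bounded, iff some
sequence `u*_{ε_k}` with `ε_k → 0⁺` converges strongly; moreover any such strong limit is a
minimizer of `J`. -/
theorem stmt_8 {H : Type*} [NormedAddCommGroup H] [InnerProductSpace ℝ H] [CompleteSpace H]
    (M : H →L[ℝ] H) (hM : IsSelfAdjoint M) (hpos : ∀ u : H, 0 ≤ ⟪M u, u⟫)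
    (f : H) (c : ℝ) (J : H → ℝ) (hJ : ∀ u, J u = ⟪M u, u⟫ + ⟪f, u⟫ + c)
    (uε : ℝ → H)
    (hmin : ∀ ε : ℝ, 0 < ε → ∀ u : H,
      J (uε ε) + ε * ‖uε ε‖ ^ 2 ≤ J u + ε * ‖u‖ ^ 2) :
    ((∃ v : H, ∀ u : H, J v ≤ J u) ↔ (∃ C : ℝ, ∀ ε : ℝ, 0 < ε → ‖uε ε‖ ≤ C)) ∧
    ((∃ v : H, ∀ u : H, J v ≤ J u) ↔
      (∃ (εk : ℕ → ℝ) (ustar : H), (∀ k, 0 < εk k) ∧ Tendsto εk atTop (nhds 0) ∧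
        Tendsto (fun k => uε (εk k)) atTop (nhds ustar))) ∧
    (∀ (εk : ℕ → ℝ) (ustar : H), (∀ k, 0 < εk k) → Tendsto εk atTop (nhds 0) →
      Tendsto (fun k => uε (εk k)) atTop (nhds ustar) →
      ∀ u : H, J ustar ≤ J u) := by
  have hsym : ∀ x y : H, ⟪M x, y⟫ = ⟪M y, x⟫ := fun x y =>
    (hM.isSymmetric x y).trans (real_inner_comm (M y) x)
  -- Euler equation for the minimizer
  have euler : ∀ a : ℝ, 0 < a → M (uε a) + (2:ℝ)⁻¹ • f + a • uε a = 0 := by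
    intro a ha
    set x := uε a with hx
    have key : ∀ v : H, 2*⟪M x, v⟫ + ⟪f, v⟫ + 2*a*⟪x, v⟫ = 0 := by
      intro v
      have hexp : ∀ t : ℝ, J (x + t • v) + a * ‖x + t • v‖ ^ 2
          = (J x + a * ‖x‖ ^ 2) + t * (2*⟪M x, v⟫ + ⟪f, v⟫ + 2*a*⟪x, v⟫)
            + t ^ 2 * (⟪M v, v⟫ + a * ‖v‖ ^ 2) := by
        intro t
        have h1 : ⟪M (x + t • v), x + t • v⟫
            = ⟪M x, x⟫ + 2*t*⟪M x, v⟫ + t^2*⟪M v, v⟫ := by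
          rw [map_add, map_smul]
          simp only [inner_add_left, inner_add_right, real_inner_smul_left,
            real_inner_smul_right]
          rw [hsym v x]
          ring
        have h2 : ‖x + t • v‖ ^ 2 = ‖x‖^2 + 2*t*⟪x, v⟫ + t^2*‖v‖^2 := by
          rw [← real_inner_self_eq_norm_sq, ← real_inner_self_eq_norm_sq,
            ← real_inner_self_eq_norm_sq]
          simp only [inner_add_left, inner_add_right, real_inner_smul_left,
            real_inner_smul_right]
          rw [real_inner_comm v x]
          ring
        have h3 : ⟪f, x + t • v⟫ = ⟪f, x⟫ + t*⟪f, v⟫ := by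
          simp [inner_add_right, real_inner_smul_right]
        rw [hJ, hJ, h1, h2, h3]; ring
      set b := 2*⟪M x, v⟫ + ⟪f, v⟫ + 2*a*⟪x, v⟫ with hb
      set q := ⟪M v, v⟫ + a * ‖v‖ ^ 2 with hq
      have hq0 : 0 ≤ q := by
        have := hpos v
        have : 0 ≤ a * ‖v‖^2 := by positivity
        nlinarith [hpos v]
      have hnn : ∀ t : ℝ, 0 ≤ t * b + t^2 * q := by
        intro t
        have := hmin a ha (x + t • v)
        rw [hexp t] at this
        linarith
      rcases eq_or_lt_of_le hq0 with hq0' | hq0'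
      · have h1 := hnn 1
        have h2 := hnn (-1)
        nlinarith
      · have hval : (-b/(2*q))*b + (-b/(2*q))^2*q = -(b^2)/(4*q) := by
          field_simp; ring
        have h0 : (0:ℝ) ≤ -(b^2)/(4*q) := hval ▸ hnn (-b/(2*q))
        have hb2 : b^2 ≤ 0 := by
          rcases div_nonneg_iff.mp h0 with ⟨ha1, _⟩ | ⟨_, ha2⟩
          · linarith
          · nlinarith
        have : b = 0 := by nlinarith [sq_nonneg b]
        exact this
    have hv : ∀ v : H, ⟪M x + (2:ℝ)⁻¹ • f + a • x, v⟫ = 0 := by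
      intro v
      simp only [inner_add_left, real_inner_smul_left]
      have := key v
      linarith
    have := hv (M x + (2:ℝ)⁻¹ • f + a • x)
    rwa [inner_self_eq_zero] at this
  -- difference identity
  have diffid : ∀ p q : ℝ, 0 < p → 0 < q →
      2*⟪M (uε p - uε q), uε p - uε q⟫ + (p+q)*‖uε p - uε q‖^2
        = (q - p)*(‖uε p‖^2 - ‖uε q‖^2) := by
    intro p q hp hq
    have e1 := euler p hp
    have e2 := euler q hq
    set x := uε p
    set y := uε q
    have hMd : M (x - y) = q • y - p • x := by
      rw [map_sub]
      have h1 : M x = -((2:ℝ)⁻¹ • f) - p • x := by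
        rw [eq_sub_iff_add_eq, ← sub_neg_eq_add, sub_eq_iff_eq_add] at *
        linear_combination (norm := module) e1
      have h2 : M y = -((2:ℝ)⁻¹ • f) - q • y := by
        linear_combination (norm := module) e2
      rw [h1, h2]; module
    have hin : ⟪M (x - y), x - y⟫ = ⟪q • y - p • x, x - y⟫ := by rw [hMd]
    simp only [inner_sub_left, inner_sub_right, real_inner_smul_left] at hin ⊢
    rw [← real_inner_self_eq_norm_sq, ← real_inner_self_eq_norm_sq,
      ← real_inner_self_eq_norm_sq] at *
    simp only [inner_sub_left, inner_sub_right]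
    rw [real_inner_comm y x] at *
    linarith [hin]
  -- monotonicity and Cauchy inequality
  have mono : ∀ p q : ℝ, 0 < p → p ≤ q → ‖uε q‖^2 ≤ ‖uε p‖^2 := by
    intro p q hp hpq
    have hq : 0 < q := lt_of_lt_of_le hp hpq
    rcases eq_or_lt_of_le hpq with rfl | hlt
    · exact le_refl _
    have h := diffid p q hp hq
    have h1 := hpos (uε p - uε q)
    have h2 : 0 ≤ (p+q)*‖uε p - uε q‖^2 := by positivity
    by_contra hcon
    push_neg at hcon
    have hprod : (q-p)*(‖uε p‖^2 - ‖uε q‖^2) < 0 :=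
      mul_neg_of_pos_of_neg (by linarith) (by linarith)
    linarith
  have cauchyIneq : ∀ p q : ℝ, 0 < p → p ≤ q → ‖uε p - uε q‖^2 ≤ ‖uε p‖^2 - ‖uε q‖^2 := by
    intro p q hp hpq
    have hq : 0 < q := lt_of_lt_of_le hp hpq
    have h := diffid p q hp hq
    have h1 := hpos (uε p - uε q)
    have h2 := mono p q hp hpq
    by_contra hcon
    push_neg at hcon
    have ha : (p+q)*(‖uε p‖^2 - ‖uε q‖^2) < (p+q)*‖uε p - uε q‖^2 :=
      mul_lt_mul_of_pos_left hcon (by linarith)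
    have hb2 : (q-p)*(‖uε p‖^2 - ‖uε q‖^2) ≤ (p+q)*(‖uε p‖^2 - ‖uε q‖^2) :=
      mul_le_mul_of_nonneg_right (by linarith) (by linarith)
    linarith
  -- Part 3: any strong limit is a minimizer
  have part3 : ∀ (εk : ℕ → ℝ) (ustar : H), (∀ k, 0 < εk k) → Tendsto εk atTop (nhds 0) →
      Tendsto (fun k => uε (εk k)) atTop (nhds ustar) →
      ∀ u : H, J ustar ≤ J u := by
    intro εk ustar hεpos hε0 hconv u
    have hMu : Tendsto (fun k => M (uε (εk k)) + (2:ℝ)⁻¹ • f + εk k • uε (εk k))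
        atTop (nhds (M ustar + (2:ℝ)⁻¹ • f + (0:ℝ) • ustar)) :=
      (((M.continuous.tendsto ustar).comp hconv).add tendsto_const_nhds).add (hε0.smul hconv)
    have hzero : Tendsto (fun k => M (uε (εk k)) + (2:ℝ)⁻¹ • f + εk k • uε (εk k))
        atTop (nhds (0:H)) := by
      have : (fun k => M (uε (εk k)) + (2:ℝ)⁻¹ • f + εk k • uε (εk k)) = fun _ => (0:H) := by
        funext k; exact euler (εk k) (hεpos k)
      rw [this]; exact tendsto_const_nhds
    have heq : M ustar + (2:ℝ)⁻¹ • f + (0:ℝ) • ustar = 0 := tendsto_nhds_unique hMu hzero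
    rw [zero_smul, add_zero] at heq
    have hf : f = (-2:ℝ) • M ustar := by
      have : (2:ℝ)⁻¹ • f = -M ustar := by
        rw [eq_neg_iff_add_eq_zero]; linear_combination (norm := module) heq
      calc f = (2:ℝ) • ((2:ℝ)⁻¹ • f) := by rw [smul_smul]; norm_num
      _ = (-2:ℝ) • M ustar := by rw [this]; module
    have hid : ∀ w : H, J w = ⟪M (w - ustar), w - ustar⟫ - ⟪M ustar, ustar⟫ + c := by
      intro w
      rw [hJ, hf, map_sub]
      simp only [inner_sub_left, inner_sub_right, real_inner_smul_left]
      rw [hsym w ustar]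
      ring
    have h1 := hid u
    have h2 := hid ustar
    rw [sub_self] at h2
    simp only [map_zero, inner_zero_left] at h2
    have := hpos (u - ustar)
    linarith
  -- minimizer implies bounded
  have h1 : (∃ v : H, ∀ u : H, J v ≤ J u) → (∃ C : ℝ, ∀ ε : ℝ, 0 < ε → ‖uε ε‖ ≤ C) := by
    rintro ⟨v, hv⟩
    refine ⟨‖v‖, fun ε hε => ?_⟩
    have h1 := hmin ε hε v
    have h2 := hv (uε ε)
    have h3 : ε * ‖uε ε‖^2 ≤ ε * ‖v‖^2 := by linarith
    have h4 : ‖uε ε‖^2 ≤ ‖v‖^2 := le_of_mul_le_mul_left (by linarith) hε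
    nlinarith [norm_nonneg (uε ε), norm_nonneg v]
  -- bounded implies convergent sequence
  have h2 : (∃ C : ℝ, ∀ ε : ℝ, 0 < ε → ‖uε ε‖ ≤ C) →
      (∃ (εk : ℕ → ℝ) (ustar : H), (∀ k, 0 < εk k) ∧ Tendsto εk atTop (nhds 0) ∧
        Tendsto (fun k => uε (εk k)) atTop (nhds ustar)) := by
    rintro ⟨C, hC⟩
    set S : Set ℝ := (fun a => ‖uε a‖^2) '' (Set.Ioi 0) with hS
    have hne : S.Nonempty := ⟨‖uε 1‖^2, 1, by norm_num, rfl⟩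
    have hbdd : BddAbove S := by
      refine ⟨C^2, ?_⟩
      rintro r ⟨a, ha, rfl⟩
      have h := hC a (Set.mem_Ioi.mp ha)
      show ‖uε a‖^2 ≤ C^2
      nlinarith [norm_nonneg (uε a)]
    set s := sSup S with hs
    have hub : ∀ a : ℝ, 0 < a → ‖uε a‖^2 ≤ s := fun a ha => le_csSup hbdd ⟨a, ha, rfl⟩
    have claim : ∀ η : ℝ, 0 < η → ∃ δ0 : ℝ, 0 < δ0 ∧ ∀ p q : ℝ, 0 < p → 0 < q →
        p ≤ δ0 → q ≤ δ0 → ‖uε p - uε q‖^2 < η := by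
      intro η hη
      obtain ⟨r, ⟨δ0, hδ0m, rfl⟩, hr⟩ := exists_lt_of_lt_csSup hne (by linarith : s - η < s)
      have hδ0 : 0 < δ0 := Set.mem_Ioi.mp hδ0m
      have hr' : s - η < ‖uε δ0‖^2 := hr
      refine ⟨δ0, hδ0, fun p q hp hq hpδ hqδ => ?_⟩
      rcases le_total p q with hpq | hpq
      · have := cauchyIneq p q hp hpq
        have := mono q δ0 hq hqδ
        have := hub p hp
        linarith
      · have := cauchyIneq q p hq hpq
        have := mono p δ0 hp hpδ
        have := hub q hq
        have : ‖uε p - uε q‖^2 = ‖uε q - uε p‖^2 := by rw [norm_sub_rev]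
        linarith
    set εk : ℕ → ℝ := fun k => 1 / ((k:ℝ) + 1) with hεk
    have hεpos : ∀ k, 0 < εk k := fun k => by positivity
    have hε0 : Tendsto εk atTop (nhds 0) := tendsto_one_div_add_atTop_nhds_zero_nat
    have hcauchy : CauchySeq (fun k => uε (εk k)) := by
      rw [Metric.cauchySeq_iff]
      intro η hη
      obtain ⟨δ0, hδ0, hδ⟩ := claim (η^2) (by positivity)
      obtain ⟨N, hN⟩ := exists_nat_gt (1/δ0)
      refine ⟨N, fun m hm n hn => ?_⟩
      have hbound : ∀ j : ℕ, N ≤ j → εk j ≤ δ0 := by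
        intro j hj
        have h1 : (1:ℝ)/δ0 < (j:ℝ) + 1 := lt_of_lt_of_le hN (by exact_mod_cast Nat.le_succ_of_le hj)
        rw [div_le_iff₀ (by positivity)]
        rw [div_lt_iff₀ hδ0] at h1
        nlinarith
      have := hδ (εk m) (εk n) (hεpos m) (hεpos n) (hbound m hm) (hbound n hn)
      rw [dist_eq_norm]
      exact lt_of_pow_lt_pow_left₀ 2 (le_of_lt hη) this
    obtain ⟨ustar, hustar⟩ := cauchySeq_tendsto_of_complete hcauchy
    exact ⟨εk, ustar, hεpos, hε0, hustar⟩
  refine ⟨⟨h1, ?_⟩, ⟨fun h => h2 (h1 h), ?_⟩, part3⟩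
  · rintro hb
    obtain ⟨εk, ustar, hp, h0, hc⟩ := h2 hb
    exact ⟨ustar, part3 εk ustar hp h0 hc⟩
  · rintro ⟨εk, ustar, hp, h0, hc⟩
    exact ⟨ustar, part3 εk ustar hp h0 hc⟩
end
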